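/- Let G and H be graphs, H having at least one edge, such that ⌈m(G)/2⌉ < m(H), where m denotes the maximum density. Then Waiter has a winning strategy in the H-game CW(G, H, 1), i.e., Waiter can guarantee that at the end of the game Client's graph contains no copy of H. -/

import Mathlib

open Finset

variable {α : Type*}

/-- Auxiliary definition: `fuel` bounds the number of remaining rounds; `C` is the set of
elements claimed by Client so far; `F` is the set of free (unclaimed) elements.
`ClientCanAux q P fuel C F` says that Client can guarantee that his final claimed set
satisfies `P` in the Client-Waiter game with bias `q`: in each round Waiter offers a set
`O` of at least one and at most `q+1` free elements, Client claims one element of `O`,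
and Waiter claims the rest. -/
def ClientCanAux [DecidableEq α] (q : ℕ) (P : Finset α → Prop) :
    ℕ → Finset α → Finset α → Prop
  | 0, C, F => F = ∅ ∧ P C
  | fuel + 1, C, F =>
    if F = ∅ then P C
    else ∀ O ⊆ F, O.Nonempty → O.card ≤ q + 1 →
      ∃ x ∈ O, ClientCanAux q P fuel (insert x C) (F \ O)

/-- Client has a strategy in the Client-Waiter game with bias `q` on the board `X`
guaranteeing that the set of elements he has claimed at the end of the game satisfies `P`. -/
def ClientCanForce [DecidableEq α] (X : Finset α) (q : ℕ) (P : Finset α → Prop) : Prop :=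
  ClientCanAux q P X.card ∅ X

/-- Analogue of `ClientCanAux` for Waiter. -/
def WaiterCanAux [DecidableEq α] (q : ℕ) (P : Finset α → Prop) :
    ℕ → Finset α → Finset α → Prop
  | 0, C, F => F = ∅ ∧ P C
  | fuel + 1, C, F =>
    if F = ∅ then P C
    else ∃ O ⊆ F, O.Nonempty ∧ O.card ≤ q + 1 ∧
      ∀ x ∈ O, WaiterCanAux q P fuel (insert x C) (F \ O)

/-- Waiter has a strategy in the Client-Waiter game with bias `q` on the board `X`
guaranteeing that the set of elements claimed by Client at the end of the game
satisfies `P`. -/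
def WaiterCanForce [DecidableEq α] (X : Finset α) (q : ℕ) (P : Finset α → Prop) : Prop :=
  WaiterCanAux q P X.card ∅ X

/-- Client's graph: the graph whose edges are the edges claimed by Client. -/
def clientGraph {V : Type*} (C : Finset (Sym2 V)) : SimpleGraph V :=
  SimpleGraph.fromEdgeSet (↑C)

/-- The board for games played on `K_n`: the edge set of the complete graph on `n` vertices. -/
def Kboard (n : ℕ) : Finset (Sym2 (Fin n)) :=
  (⊤ : SimpleGraph (Fin n)).edgeFinset

/-- `G` contains a copy of `H`. -/
def ContainsCopy {W V : Type*} (H : SimpleGraph W) (G : SimpleGraph V) : Prop :=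
  ∃ f : W → V, Function.Injective f ∧ ∀ ⦃a b : W⦄, H.Adj a b → G.Adj (f a) (f b)

/-- The 2-density `d₂(H)` of a graph `H`. -/
noncomputable def twoDensity {β : Type*} (H : SimpleGraph β) : ℝ :=
  if 3 ≤ Nat.card β then ((H.edgeSet.ncard : ℝ) - 1) / ((Nat.card β : ℝ) - 2) else 0

/-- The maximum 2-density `m₂(H)` of a graph `H`. -/
noncomputable def maxTwoDensity {β : Type*} (H : SimpleGraph β) : ℝ :=
  sSup {x : ℝ | ∃ H' : H.Subgraph, 3 ≤ H'.verts.ncard ∧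
    x = ((H'.edgeSet.ncard : ℝ) - 1) / ((H'.verts.ncard : ℝ) - 2)}

/-- The maximum density `m(G)` of a graph `G`. -/
noncomputable def maxDensity {β : Type*} (G : SimpleGraph β) : ℝ :=
  sSup {x : ℝ | ∃ G' : G.Subgraph, G'.verts.Nonempty ∧
    x = (G'.edgeSet.ncard : ℝ) / (G'.verts.ncard : ℝ)}

/-- The arboricity `ar(G)` of a graph `G`. -/
noncomputable def arboricity {β : Type*} (G : SimpleGraph β) : ℝ :=
  sSup {x : ℝ | ∃ G' : G.Subgraph, 2 ≤ G'.verts.ncard ∧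
    x = (G'.edgeSet.ncard : ℝ) / ((G'.verts.ncard : ℝ) - 1)}

/-- `H` is strictly 2-balanced: every proper subgraph with at least 3 vertices has
strictly smaller 2-density. -/
def StrictlyTwoBalanced {β : Type*} (H : SimpleGraph β) : Prop :=
  ∀ H' : H.Subgraph, H' ≠ ⊤ → 3 ≤ H'.verts.ncard → twoDensity H'.coe < twoDensity H

open Classical in
/-- The probability that Client has a winning strategy in the `H`-game `CW(G_{n,p}, H, q)`,
where the random graph `G_{n,p}` is generated by keeping each edge of `K_n` independently
with probability `p`. -/
noncomputable def probClientWinsHGame {β : Type*} (H : SimpleGraph β) (q n : ℕ) (p : ℝ) : ℝ :=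
  ∑ E ∈ (Kboard n).powerset,
    p ^ E.card * (1 - p) ^ ((Kboard n).card - E.card) *
      (if ClientCanForce E q (fun C => ContainsCopy H (clientGraph C)) then 1 else 0)

/-- Vertices of the complete `k`-ary rooted tree of height `k`: a vertex at depth `i ≤ k`
is a sequence of `i` choices among `k` children. -/
abbrev TreeVert (k : ℕ) : Type := (i : Fin (k + 1)) × (Fin (i : ℕ) → Fin k)

/-- `u` is a child of `v` in the complete `k`-ary tree. -/
def IsChildOf {k : ℕ} (u v : TreeVert k) : Prop :=
  ∃ h : (u.1 : ℕ) = (v.1 : ℕ) + 1,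
    ∀ t : Fin (v.1 : ℕ), u.2 ⟨t.1, by have := t.2; omega⟩ = v.2 t

/-- The complete `k`-ary tree of height `k`, `T_{k,k}`. -/
def Tkk (k : ℕ) : SimpleGraph (TreeVert k) where
  Adj u v := IsChildOf u v ∨ IsChildOf v u
  symm := ⟨by intro u v h; tauto⟩
  loopless := ⟨by
    intro u h
    rcases h with ⟨h, _⟩ | ⟨h, _⟩ <;> omega⟩

/-!
Put `k = ⌈m(G)/2⌉`, so every subgraph of `G` has at most `2k` edges per vertex. By Hall's theorem
every edge of `G` can then be given one of its endpoints and a slot `(i, j) ∈ [k] × {0, 1}` so that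
no two edges get the same vertex and slot. Waiter offers, one after another, the (at most two)
edges sharing a vertex and a slot index `i`. Client then holds at most one edge per vertex and
index, so each subgraph of his graph has at most `k` edges per vertex: its maximum density is at
most `k < m(H)`, while a copy of `H` would give it density at least `m(H)`.
-/

section Game

variable {α : Type*} [DecidableEq α] {q : ℕ}

theorem WaiterCanAux.mono {P Q : Finset α → Prop} (hPQ : ∀ C, P C → Q C) :
    ∀ {fuel : ℕ} {C F : Finset α}, WaiterCanAux q P fuel C F → WaiterCanAux q Q fuel C F
  | 0, C, _, h => ⟨h.1, hPQ C h.2⟩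
  | fuel + 1, C, F, h => by
    rw [WaiterCanAux] at h ⊢
    split_ifs at h ⊢
    · exact hPQ C h
    · obtain ⟨O, hOF, hO, hOq, hwin⟩ := h
      exact ⟨O, hOF, hO, hOq, fun x hx => (hwin x hx).mono hPQ⟩

theorem WaiterCanForce.mono {X : Finset α} {P Q : Finset α → Prop} (h : WaiterCanForce X q P)
    (hPQ : ∀ C, P C → Q C) : WaiterCanForce X q Q :=
  WaiterCanAux.mono hPQ h

/-- Waiter's strategy: offer the fibres of `g` one at a time. -/
theorem waiterCanAux_of_card_fibre_le {ι : Type*} [DecidableEq ι] {P : Finset α → Prop}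
    (g : α → ι) :
    ∀ {fuel : ℕ} {C F : Finset α}, #F ≤ fuel →
      (∀ x ∈ F, #{y ∈ F | g y = g x} ≤ q + 1) →
      (∀ T ⊆ F, Set.InjOn g T → P (C ∪ T)) → WaiterCanAux q P fuel C F
  | 0, C, F, hF, _, hP => by
    obtain rfl : F = ∅ := card_eq_zero.mp (Nat.le_zero.mp hF)
    exact ⟨rfl, by simpa using hP ∅ le_rfl (by simp)⟩
  | fuel + 1, C, F, hF, hfibre, hP => by
    rw [WaiterCanAux]
    split_ifs with hF₀
    · simpa using hP ∅ (empty_subset _) (by simp)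
    obtain ⟨x₀, hx₀⟩ := nonempty_iff_ne_empty.mpr hF₀
    set O := {y ∈ F | g y = g x₀}
    have hx₀O : x₀ ∈ O := mem_filter.mpr ⟨hx₀, rfl⟩
    refine ⟨O, filter_subset _ _, ⟨x₀, hx₀O⟩, hfibre x₀ hx₀, fun x hx => ?_⟩
    obtain ⟨hxF, hgx⟩ := mem_filter.mp hx
    refine waiterCanAux_of_card_fibre_le g ?_ (fun y hy => ?_) (fun T hT hTinj => ?_)
    · have : #(F \ O) < #F := card_lt_card (sdiff_ssubset (filter_subset _ F) ⟨x₀, hx₀O⟩)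
      omega
    · exact (card_le_card (filter_subset_filter _ sdiff_subset)).trans
        (hfibre y (sdiff_subset hy))
    · have hxT : g x ∉ g '' T := by
        rintro ⟨t, ht, hgt⟩
        have htF := mem_sdiff.mp (hT ht)
        exact htF.2 (mem_filter.mpr ⟨htF.1, hgt.trans hgx⟩)
      have hxT' : x ∉ T := fun h => hxT ⟨x, h, rfl⟩
      rw [insert_union, ← union_insert]
      refine hP _ (insert_subset hxF (hT.trans sdiff_subset)) ?_
      rw [coe_insert, Set.injOn_insert hxT']
      exact ⟨hTinj, hxT⟩

theorem waiterCanForce_of_card_fibre_le {ι : Type*} [DecidableEq ι] {X : Finset α}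
    {P : Finset α → Prop} (g : α → ι) (hfibre : ∀ x ∈ X, #{y ∈ X | g y = g x} ≤ q + 1)
    (hP : ∀ T ⊆ X, Set.InjOn g T → P T) : WaiterCanForce X q P :=
  waiterCanAux_of_card_fibre_le g le_rfl hfibre fun T hT hTinj => by
    simpa using hP T hT hTinj

end Game

namespace SimpleGraph

variable {V W ι : Type*}

theorem maxDensity_nonneg (G : SimpleGraph V) : 0 ≤ maxDensity G :=
  Real.sSup_nonneg (by rintro _ ⟨G', -, rfl⟩; positivity)

theorem maxDensity_le {G : SimpleGraph V} {c : ℝ} (hc : 0 ≤ c)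
    (h : ∀ G' : G.Subgraph, G'.verts.Nonempty → (G'.edgeSet.ncard : ℝ) ≤ c * G'.verts.ncard) :
    maxDensity G ≤ c := by
  refine Real.sSup_le ?_ hc
  rintro _ ⟨G', hG', rfl⟩
  exact div_le_of_le_mul₀ (Nat.cast_nonneg _) hc (h G' hG')

theorem density_le_maxDensity [Finite V] {G : SimpleGraph V} (G' : G.Subgraph)
    (hG' : G'.verts.Nonempty) : (G'.edgeSet.ncard : ℝ) / G'.verts.ncard ≤ maxDensity G := by
  refine le_csSup (Set.Finite.bddAbove ?_) ⟨G', hG', rfl⟩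
  refine (Set.finite_range fun G' : G.Subgraph => (G'.edgeSet.ncard : ℝ) / G'.verts.ncard).subset ?_
  rintro _ ⟨G', -, rfl⟩
  exact ⟨G', rfl⟩

theorem _root_.ContainsCopy.maxDensity_le [Finite W] {H : SimpleGraph V} {K : SimpleGraph W}
    (h : ContainsCopy H K) : maxDensity H ≤ maxDensity K := by
  obtain ⟨f, hf, hadj⟩ := h
  let φ : H →g K := ⟨f, fun hab => hadj hab⟩
  have hφ : Function.Injective φ := hf
  refine Real.sSup_le ?_ K.maxDensity_nonneg
  rintro _ ⟨H', hH', rfl⟩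
  have := density_le_maxDensity (H'.map φ) (hH'.image f)
  rwa [Subgraph.edgeSet_map, Subgraph.map_verts, Set.ncard_image_of_injective _ hφ,
    Set.ncard_image_of_injective _ (Sym2.map.injective hφ)] at this

theorem card_le_maxDensity_mul [Finite V] [DecidableEq V] {G : SimpleGraph V}
    (S : Finset (Sym2 V)) (hS : ↑S ⊆ G.edgeSet) :
    (#S : ℝ) ≤ maxDensity G * #(S.biUnion Sym2.toFinset) := by
  obtain rfl | hSne := S.eq_empty_or_nonempty
  · simp
  set U := S.biUnion Sym2.toFinset
  have hU : (U : Set V).Nonempty := by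
    obtain ⟨e, he⟩ := hSne
    exact ⟨e.out.1, mem_biUnion.mpr ⟨e, he, Sym2.mem_toFinset.mpr e.out_fst_mem⟩⟩
  have hSU : (S : Set (Sym2 V)) ⊆ ((⊤ : G.Subgraph).induce U).edgeSet := by
    intro e he
    induction e using Sym2.ind with
    | _ a b =>
      have hab : s(a, b) ∈ S := he
      simp only [Subgraph.mem_edgeSet, Subgraph.induce_adj, Subgraph.top_adj]
      exact ⟨mem_biUnion.mpr ⟨_, hab, by simp⟩, mem_biUnion.mpr ⟨_, hab, by simp⟩, hS he⟩
  have hdens := density_le_maxDensity ((⊤ : G.Subgraph).induce U) hU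
  rw [Subgraph.induce_verts, Set.ncard_coe_finset,
    div_le_iff₀ (by exact_mod_cast card_pos.mpr (coe_nonempty.mp hU))] at hdens
  calc (#S : ℝ) = (S : Set (Sym2 V)).ncard := by rw [Set.ncard_coe_finset]
    _ ≤ ((⊤ : G.Subgraph).induce U).edgeSet.ncard := by
      exact_mod_cast Set.ncard_le_ncard hSU (Set.toFinite _)
    _ ≤ maxDensity G * #U := hdens

theorem exists_injOn_label [DecidableEq V] [Nonempty ι] {G : SimpleGraph V}
    (s : Finset ι)
    (hG : ∀ S : Finset (Sym2 V), ↑S ⊆ G.edgeSet → #S ≤ #s * #(S.biUnion Sym2.toFinset)) :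
    ∃ label : Sym2 V → V × ι, Set.InjOn label G.edgeSet ∧
      ∀ e ∈ G.edgeSet, (label e).1 ∈ e ∧ (label e).2 ∈ s := by
  classical
  obtain ⟨f, hf, hfmem⟩ := (all_card_le_biUnion_card_iff_exists_injective
    fun e : G.edgeSet => (e : Sym2 V).toFinset ×ˢ s).mp fun S => by
      have hS := hG (S.map (Function.Embedding.subtype _)) fun e he => by
        obtain ⟨e', -, rfl⟩ := mem_map.mp he
        exact e'.2
      have hbiUnion : S.biUnion (fun e : G.edgeSet => (e : Sym2 V).toFinset ×ˢ s) =
          (S.map (Function.Embedding.subtype _)).biUnion Sym2.toFinset ×ˢ s := by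
        ext; simp [← exists_and_right, and_assoc]
      rw [hbiUnion, card_product]
      simpa [mul_comm] using hS
  refine ⟨fun e => if h : e ∈ G.edgeSet then f ⟨e, h⟩ else (e.out.1, Classical.arbitrary ι),
    fun e he e' he' h => ?_, fun e he => ?_⟩
  · dsimp only at h
    rw [dif_pos he, dif_pos he'] at h
    exact congrArg Subtype.val (hf h)
  · simpa [dif_pos he, Sym2.mem_toFinset] using hfmem ⟨e, he⟩

theorem maxDensity_le_card_of_injOn [Finite V] {G : SimpleGraph V} (s : Finset ι)
    (label : Sym2 V → V × ι) (hinj : Set.InjOn label G.edgeSet)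
    (hlabel : ∀ e ∈ G.edgeSet, (label e).1 ∈ e ∧ (label e).2 ∈ s) : maxDensity G ≤ #s := by
  refine maxDensity_le (Nat.cast_nonneg _) fun G' _ => ?_
  have hcard : G'.edgeSet.ncard ≤ (G'.verts ×ˢ (s : Set ι)).ncard :=
    Set.ncard_le_ncard_of_injOn label
      (fun e he => ⟨G'.mem_verts_of_mem_edge he (hlabel e (G'.edgeSet_subset he)).1,
        (hlabel e (G'.edgeSet_subset he)).2⟩)
      (hinj.mono G'.edgeSet_subset) (G'.verts.toFinite.prod s.finite_toSet)
  rw [Set.ncard_prod, Set.ncard_coe_finset, mul_comm] at hcard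
  exact_mod_cast hcard

end SimpleGraph

theorem waiterCanForce_maxDensity_clientGraph_le {V : Type*} [Fintype V] [DecidableEq V]
    (G : SimpleGraph V) [DecidableRel G.Adj] (k : ℕ) (hG : maxDensity G ≤ 2 * k) :
    WaiterCanForce G.edgeFinset 1 (fun C => maxDensity (clientGraph C) ≤ k) := by
  set s : Finset (ℕ × Fin 2) := range k ×ˢ univ
  have hs : (#s : ℝ) = 2 * k := by simp [s, mul_comm]
  obtain ⟨label, hinj, hlabel⟩ := G.exists_injOn_label s fun S hS => by
    have hS := (G.card_le_maxDensity_mul S hS).trans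
      (mul_le_mul_of_nonneg_right (hG.trans_eq hs.symm) (Nat.cast_nonneg _))
    exact_mod_cast hS
  let key e := ((label e).1, (label e).2.1)
  refine waiterCanForce_of_card_fibre_le key (fun x _ => ?_) fun T hT hTinj => ?_
  · calc #{y ∈ G.edgeFinset | key y = key x} ≤ #(univ : Finset (Fin 2)) := by
          refine card_le_card_of_injOn (fun y => (label y).2.2) (by simp) fun y hy y' hy' h => ?_
          obtain ⟨hyE, hyx⟩ := mem_filter.mp hy
          obtain ⟨hy'E, hy'x⟩ := mem_filter.mp hy'
          have hkey : key y = key y' := hyx.trans hy'x.symm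
          exact hinj (G.mem_edgeFinset.mp hyE) (G.mem_edgeFinset.mp hy'E)
            (Prod.ext (congrArg Prod.fst hkey :) (Prod.ext (congrArg Prod.snd hkey :) h))
      _ = 1 + 1 := rfl
  · have hTE : (T : Set (Sym2 V)) ⊆ G.edgeSet := by simpa using coe_subset.mpr hT
    have hclient : (clientGraph T).edgeSet ⊆ T := by
      rw [clientGraph, SimpleGraph.edgeSet_fromEdgeSet]
      exact Set.sdiff_subset
    refine (SimpleGraph.maxDensity_le_card_of_injOn (range k) key (hTinj.mono hclient)
      fun e he => ?_).trans (by simp)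
    have := hlabel e (hTE (hclient he))
    exact ⟨this.1, (mem_product.mp this.2).1⟩

theorem stmt18_general {β V : Type*} [Fintype V] [DecidableEq V]
    (H : SimpleGraph β) (G : SimpleGraph V) [DecidableRel G.Adj]
    (hm : (⌈maxDensity G / 2⌉ : ℝ) < maxDensity H) :
    WaiterCanForce G.edgeFinset 1 (fun C => ¬ ContainsCopy H (clientGraph C)) := by
  set k := ⌈maxDensity G / 2⌉.toNat
  have hk : (k : ℝ) = ⌈maxDensity G / 2⌉ := by
    exact_mod_cast Int.toNat_of_nonneg (Int.ceil_nonneg (by linarith [G.maxDensity_nonneg]))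
  have hG : maxDensity G ≤ 2 * k := by
    linarith [Int.le_ceil (maxDensity G / 2)]
  refine (waiterCanForce_maxDensity_clientGraph_le G k hG).mono fun C hC hcopy => ?_
  exact ((ContainsCopy.maxDensity_le hcopy).trans hC).not_gt (hk ▸ hm)

/-- Lemma 9: if `⌈m(G)/2⌉ < m(H)` then Waiter has a winning strategy for the
`CW(G, H, 1)` game. -/
theorem stmt18 {β V : Type*} [Fintype β] [Fintype V] [DecidableEq V]
    (H : SimpleGraph β) (G : SimpleGraph V) [DecidableRel G.Adj]
    (hH : H.edgeSet.Nonempty)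
    (hm : (⌈maxDensity G / 2⌉ : ℝ) < maxDensity H) :
    WaiterCanForce G.edgeFinset 1 (fun C => ¬ ContainsCopy H (clientGraph C)) :=
  stmt18_general H G hm
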